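/- Let G be a countable group and let μ, {μ_k} be probability measures on G with finite Shannon entropy such that μ_k(g) → μ(g) for all g ∈ G and H(μ_k) → H(μ). Then for every fixed n ≥ 1, the convolution powers converge pointwise, μ_k^{*n}(g) → μ^{*n}(g) for all g, and their entropies converge: H(μ_k^{*n}) → H(μ^{*n}). -/

import Mathlib

open Real Filter
open scoped ENNReal Classical

noncomputable section

/-- A probability mass function on a countable set, as a real-valued function. -/
def IsPMF {G : Type*} (μ : G → ℝ) : Prop := (∀ g, 0 ≤ μ g) ∧ ∑' g, μ g = 1

/-- Convolution of two measures on a group. -/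
def conv {G : Type*} [Group G] (μ ν : G → ℝ) : G → ℝ := fun g => ∑' h : G, μ h * ν (h⁻¹ * g)

/-- `n`-fold convolution power, with `μ^{*0} = δ_e`. -/
def convPow {G : Type*} [Group G] (μ : G → ℝ) : ℕ → G → ℝ
  | 0 => fun g => if g = 1 then 1 else 0
  | n + 1 => conv (convPow μ n) μ

/-- Shannon entropy of a measure on a countable set. -/
def Hent {G : Type*} (μ : G → ℝ) : ℝ := ∑' g : G, Real.negMulLog (μ g)

/-- Position of the random walk after `m` steps, given the first `n` increments. -/
def walkProd {G : Type*} [Monoid G] {n : ℕ} (g : Fin n → G) (m : ℕ) : G :=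
  ((List.ofFn g).take m).prod

/-- The escape probability of the `μ`-random walk: the probability of never
returning to the identity at any positive time, expressed as the infimum of the
finite-time non-return probabilities. -/
def pesc {G : Type*} [Group G] (μ : G → ℝ) : ℝ :=
  ⨅ n : ℕ, ∑' g : Fin n → G,
    if ∀ m, 1 ≤ m → m ≤ n → walkProd g m ≠ 1 then ∏ i, μ (g i) else 0

/-!
The `(n+1)`-st convolution power is the image of `μ^{*n} ⊗ μ` under multiplication, so by
induction it suffices that convergence in the sense of the hypotheses (pointwise, with convergent
entropies) passes to products and to images. For products this is additivity of entropy. For an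
image `ν = f_* p` one has `H(p) = H(ν) + ∑ₓ D(x)` with the conditional-entropy density
`D(x) = p(x) log (ν(f x) / p(x)) ≥ 0`. Fatou's lemma makes both `H(ν)` and `∑ₓ D(x)` lower
semicontinuous under pointwise convergence, and their sum converges, so each of them converges.
The same argument, applied to a fiber and its complement, gives pointwise convergence of `ν`.
-/

open Topology

section Fatou

variable {ι α : Type*} {l : Filter ι}

lemma eventually_lt_tsum_of_tendsto {f : ι → α → ℝ} {g : α → ℝ} (hf : ∀ i x, 0 ≤ f i x)
    (hfs : ∀ i, Summable (f i)) (hg : Summable g)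
    (hlim : ∀ x, Tendsto (fun i => f i x) l (𝓝 (g x))) {b : ℝ} (hb : b < ∑' x, g x) :
    ∀ᶠ i in l, b < ∑' x, f i x := by
  obtain ⟨F, hF⟩ := (hg.hasSum.eventually (eventually_gt_nhds hb)).exists
  filter_upwards [(tendsto_finsetSum F fun x _ => hlim x).eventually (eventually_gt_nhds hF)]
    with i hi
  exact hi.trans_le ((hfs i).sum_le_tsum F fun x _ => hf i x)

lemma tendsto_of_tendsto_add {a b : ι → ℝ} {A B : ℝ} (ha : ∀ c < A, ∀ᶠ i in l, c < a i)
    (hb : ∀ c < B, ∀ᶠ i in l, c < b i) (hab : Tendsto (fun i => a i + b i) l (𝓝 (A + B))) :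
    Tendsto a l (𝓝 A) := by
  refine tendsto_order.2 ⟨ha, fun c hc => ?_⟩
  filter_upwards [hb (B - (c - A) / 2) (by linarith),
    hab.eventually (eventually_lt_nhds (show A + B < A + B + (c - A) / 2 by linarith))]
    with i hbi habi
  linarith

end Fatou

namespace IsPMF

variable {α β : Type*} {p : α → ℝ} {q : β → ℝ}

lemma summable (hp : IsPMF p) : Summable p := by
  by_contra h
  simpa [tsum_eq_zero_of_not_summable h] using hp.2

lemma le_one (hp : IsPMF p) (x : α) : p x ≤ 1 :=
  hp.2 ▸ hp.summable.le_tsum x fun y _ => hp.1 y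

lemma negMulLog_nonneg (hp : IsPMF p) (x : α) : 0 ≤ negMulLog (p x) :=
  Real.negMulLog_nonneg (hp.1 x) (hp.le_one x)

lemma prod (hp : IsPMF p) (hq : IsPMF q) : IsPMF fun z : α × β => p z.1 * q z.2 := by
  refine ⟨fun z => mul_nonneg (hp.1 z.1) (hq.1 z.2), ?_⟩
  have h := hp.summable.hasSum.mul hq.summable.hasSum
    (hp.summable.mul_of_nonneg hq.summable hp.1 hq.1)
  rw [hp.2, hq.2, one_mul] at h
  exact h.tsum_eq

lemma hasSum_negMulLog_prod (hp : IsPMF p) (hq : IsPMF q)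
    (hHp : Summable fun x => negMulLog (p x)) (hHq : Summable fun y => negMulLog (q y)) :
    HasSum (fun z : α × β => negMulLog (p z.1 * q z.2)) (Hent p + Hent q) := by
  have h₁ := hHp.hasSum.mul hq.summable.hasSum
    (hHp.mul_of_nonneg hq.summable hp.negMulLog_nonneg hq.1)
  have h₂ := hp.summable.hasSum.mul hHq.hasSum
    (hp.summable.mul_of_nonneg hHq hp.1 hq.negMulLog_nonneg)
  rw [hq.2, mul_one] at h₁
  rw [hp.2, one_mul] at h₂
  have hsplit : (fun z : α × β => negMulLog (p z.1 * q z.2))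
      = fun z => negMulLog (p z.1) * q z.2 + p z.1 * negMulLog (q z.2) := by
    ext z
    rw [negMulLog_mul]
    ring
  rw [hsplit]
  exact h₁.add h₂

end IsPMF

section PmfMap

variable {α β : Type*}

def pmfMap (f : α → β) (p : α → ℝ) (y : β) : ℝ := ∑' x : f ⁻¹' {y}, p x

/-- The conditional-entropy density `p x · log (ν (f x) / p x)` of `p` given `f`, where
`ν = pmfMap f p`; written without division so that it is `0` where `p x = 0`. -/
def condEntropyDensity (f : α → β) (p : α → ℝ) (x : α) : ℝ :=
  negMulLog (p x) + p x * log (pmfMap f p (f x))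

variable {f : α → β} {p : α → ℝ}

lemma IsPMF.map (hp : IsPMF p) : IsPMF (pmfMap f p) :=
  ⟨fun _ => tsum_nonneg fun x => hp.1 x, ((hp.2 ▸ hp.summable.hasSum).tsum_fiberwise f).tsum_eq⟩

lemma IsPMF.le_pmfMap (hp : IsPMF p) (x : α) : p x ≤ pmfMap f p (f x) :=
  (hp.summable.subtype _).le_tsum (⟨x, rfl⟩ : f ⁻¹' {f x}) fun y _ => hp.1 y

lemma IsPMF.condEntropyDensity_nonneg (hp : IsPMF p) (x : α) :
    0 ≤ condEntropyDensity f p x := by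
  rcases (hp.1 x).eq_or_lt with h0 | hpos
  · simp [condEntropyDensity, ← h0]
  · have hlog : log (p x) ≤ log (pmfMap f p (f x)) :=
      log_le_log hpos (hp.le_pmfMap x)
    rw [condEntropyDensity, negMulLog]
    nlinarith

lemma IsPMF.condEntropyDensity_le (hp : IsPMF p) (x : α) :
    condEntropyDensity f p x ≤ negMulLog (p x) := by
  have hν := hp.map (f := f)
  have : p x * log (pmfMap f p (f x)) ≤ 0 :=
    mul_nonpos_of_nonneg_of_nonpos (hp.1 x) (log_nonpos (hν.1 _) (hν.le_one _))
  rw [condEntropyDensity]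
  linarith

lemma IsPMF.summable_condEntropyDensity (hp : IsPMF p) (hH : Summable fun x => negMulLog (p x)) :
    Summable (condEntropyDensity f p) :=
  hH.of_nonneg_of_le hp.condEntropyDensity_nonneg hp.condEntropyDensity_le

lemma IsPMF.hasSum_negMulLog_pmfMap (hp : IsPMF p)
    (hH : Summable fun x => negMulLog (p x)) :
    HasSum (fun y => negMulLog (pmfMap f p y)) (Hent p - ∑' x, condEntropyDensity f p x) := by
  have h := (hH.hasSum.sub (hp.summable_condEntropyDensity (f := f) hH).hasSum).tsum_fiberwise f
  have hfiber : ∀ y, ∑' x : f ⁻¹' {y}, (negMulLog (p x) - condEntropyDensity f p x)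
      = negMulLog (pmfMap f p y) := by
    intro y
    have hterm : ∀ x : f ⁻¹' {y},
        negMulLog (p x) - condEntropyDensity f p x = -log (pmfMap f p y) * p x := by
      rintro ⟨x, rfl⟩
      rw [condEntropyDensity]
      ring
    rw [tsum_congr hterm, tsum_mul_left, negMulLog, pmfMap]
    ring
  simp only [hfiber] at h
  exact h

end PmfMap

section Convergence

variable {ι α β : Type*} {l : Filter ι}

lemma tendsto_tsum_subtype_of_isPMF {pk : ι → α → ℝ} {p : α → ℝ} (hp : IsPMF p)
    (hpk : ∀ i, IsPMF (pk i)) (hlim : ∀ x, Tendsto (fun i => pk i x) l (𝓝 (p x))) (s : Set α) :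
    Tendsto (fun i => ∑' x : s, pk i x) l (𝓝 (∑' x : s, p x)) := by
  have hfatou : ∀ t : Set α, ∀ c < ∑' x : t, p x, ∀ᶠ i in l, c < ∑' x : t, pk i x :=
    fun t c hc => eventually_lt_tsum_of_tendsto (f := fun i (x : t) => pk i x)
      (fun i x => (hpk i).1 x) (fun i => (hpk i).summable.subtype t) (hp.summable.subtype t)
      (fun x => hlim x) hc
  have hsplit : ∀ {r : α → ℝ}, IsPMF r → ∑' x : s, r x + ∑' x : ↑sᶜ, r x = 1 := fun hr =>
    ((hr.summable.subtype s).tsum_add_tsum_compl (hr.summable.subtype sᶜ)).trans hr.2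
  refine tendsto_of_tendsto_add (hfatou s) (hfatou sᶜ) ?_
  rw [hsplit hp]
  exact tendsto_const_nhds.congr fun i => (hsplit (hpk i)).symm

structure TendstoInEntropy (l : Filter ι) (pk : ι → α → ℝ) (p : α → ℝ) : Prop where
  isPMF : IsPMF p
  isPMF_seq : ∀ i, IsPMF (pk i)
  summable_negMulLog : Summable fun x => negMulLog (p x)
  summable_negMulLog_seq : ∀ i, Summable fun x => negMulLog (pk i x)
  tendsto_apply : ∀ x, Tendsto (fun i => pk i x) l (𝓝 (p x))
  tendsto_entropy : Tendsto (fun i => Hent (pk i)) l (𝓝 (Hent p))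

namespace TendstoInEntropy

variable {pk : ι → α → ℝ} {p : α → ℝ} {qk : ι → β → ℝ} {q : β → ℝ}

lemma const (hp : IsPMF p) (hH : Summable fun x => negMulLog (p x)) :
    TendstoInEntropy l (fun _ => p) p :=
  ⟨hp, fun _ => hp, hH, fun _ => hH, fun _ => tendsto_const_nhds, tendsto_const_nhds⟩

lemma prod (hp : TendstoInEntropy l pk p) (hq : TendstoInEntropy l qk q) :
    TendstoInEntropy l (fun i (z : α × β) => pk i z.1 * qk i z.2) (fun z => p z.1 * q z.2) := by
  have hent := fun i => (hp.isPMF_seq i).hasSum_negMulLog_prod (hq.isPMF_seq i)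
    (hp.summable_negMulLog_seq i) (hq.summable_negMulLog_seq i)
  have hent₀ := hp.isPMF.hasSum_negMulLog_prod hq.isPMF hp.summable_negMulLog hq.summable_negMulLog
  refine ⟨hp.isPMF.prod hq.isPMF, fun i => (hp.isPMF_seq i).prod (hq.isPMF_seq i),
    hent₀.summable, fun i => (hent i).summable,
    fun z : α × β => (hp.tendsto_apply z.1).mul (hq.tendsto_apply z.2), ?_⟩
  simp only [Hent, hent₀.tsum_eq, (hent _).tsum_eq]
  exact hp.tendsto_entropy.add hq.tendsto_entropy

lemma tendsto_condEntropyDensity (h : TendstoInEntropy l pk p) (f : α → β) (x : α) :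
    Tendsto (fun i => condEntropyDensity f (pk i) x) l (𝓝 (condEntropyDensity f p x)) := by
  have hν : Tendsto (fun i => pmfMap f (pk i) (f x)) l (𝓝 (pmfMap f p (f x))) :=
    tendsto_tsum_subtype_of_isPMF h.isPMF h.isPMF_seq h.tendsto_apply _
  have hH : Tendsto (fun i => negMulLog (pk i x)) l (𝓝 (negMulLog (p x))) :=
    (continuous_negMulLog.tendsto _).comp (h.tendsto_apply x)
  rcases (h.isPMF.1 x).eq_or_lt with h0 | hpos
  · -- the factor `log (pmfMap f (pk i) (f x))` may diverge, so squeeze instead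
    have hD : condEntropyDensity f p x = 0 := by simp [condEntropyDensity, ← h0]
    rw [← h0, negMulLog_zero] at hH
    rw [hD]
    exact squeeze_zero (fun i => (h.isPMF_seq i).condEntropyDensity_nonneg x)
      (fun i => (h.isPMF_seq i).condEntropyDensity_le x) hH
  · exact hH.add ((h.tendsto_apply x).mul
      (hν.log (hpos.trans_le (h.isPMF.le_pmfMap x)).ne'))

lemma map (h : TendstoInEntropy l pk p) (f : α → β) :
    TendstoInEntropy l (fun i => pmfMap f (pk i)) (pmfMap f p) := by
  have hchain := h.isPMF.hasSum_negMulLog_pmfMap (f := f) h.summable_negMulLog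
  have hchain_seq := fun i =>
    (h.isPMF_seq i).hasSum_negMulLog_pmfMap (f := f) (h.summable_negMulLog_seq i)
  have hν := h.isPMF.map (f := f)
  have hνk := fun i => (h.isPMF_seq i).map (f := f)
  have hlim : ∀ y, Tendsto (fun i => pmfMap f (pk i) y) l (𝓝 (pmfMap f p y)) :=
    fun y => tendsto_tsum_subtype_of_isPMF h.isPMF h.isPMF_seq h.tendsto_apply _
  refine ⟨hν, hνk, hchain.summable, fun i => (hchain_seq i).summable, hlim, ?_⟩
  have hHent : ∀ c < Hent (pmfMap f p), ∀ᶠ i in l, c < Hent (pmfMap f (pk i)) :=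
    fun c => eventually_lt_tsum_of_tendsto (fun i y => (hνk i).negMulLog_nonneg y)
      (fun i => (hchain_seq i).summable) hchain.summable
      (fun y => (continuous_negMulLog.tendsto _).comp (hlim y))
  have hcond : ∀ c < ∑' x, condEntropyDensity f p x,
      ∀ᶠ i in l, c < ∑' x, condEntropyDensity f (pk i) x :=
    fun c => eventually_lt_tsum_of_tendsto
      (fun i => (h.isPMF_seq i).condEntropyDensity_nonneg)
      (fun i => (h.isPMF_seq i).summable_condEntropyDensity (h.summable_negMulLog_seq i))
      (h.isPMF.summable_condEntropyDensity h.summable_negMulLog)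
      (h.tendsto_condEntropyDensity f)
  refine tendsto_of_tendsto_add hHent hcond ?_
  simp only [Hent, hchain.tsum_eq, (hchain_seq _).tsum_eq, sub_add_cancel]
  exact h.tendsto_entropy

end TendstoInEntropy

end Convergence

section Convolution

variable {G : Type*} [Group G]

def factorizationsEquiv (g : G) : G ≃ (fun z : G × G => z.1 * z.2) ⁻¹' {g} where
  toFun h := ⟨(h, h⁻¹ * g), by simp⟩
  invFun z := z.1.1
  left_inv _ := rfl
  right_inv := by
    rintro ⟨⟨a, b⟩, rfl : a * b = g⟩
    simp

lemma conv_eq_pmfMap (ν μ : G → ℝ) :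
    conv ν μ = pmfMap (fun z : G × G => z.1 * z.2) (fun z => ν z.1 * μ z.2) :=
  funext fun g => (factorizationsEquiv g).tsum_eq fun z => ν z.1.1 * μ z.1.2

variable {ι : Type*} {l : Filter ι}

lemma TendstoInEntropy.conv {νk μk : ι → G → ℝ} {ν μ : G → ℝ} (hν : TendstoInEntropy l νk ν)
    (hμ : TendstoInEntropy l μk μ) :
    TendstoInEntropy l (fun i => conv (νk i) (μk i)) (conv ν μ) := by
  simpa only [conv_eq_pmfMap] using (hν.prod hμ).map _

lemma isPMF_convPow_zero (μ : G → ℝ) : IsPMF (convPow μ 0) :=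
  ⟨fun g => by unfold convPow; split_ifs <;> norm_num, tsum_ite_eq (1 : G) fun _ => (1 : ℝ)⟩

lemma summable_negMulLog_convPow_zero (μ : G → ℝ) :
    Summable fun g => negMulLog (convPow μ 0 g) := by
  have hzero : (fun g => negMulLog (convPow μ 0 g)) = 0 := by
    funext g
    unfold convPow
    split_ifs <;> simp
  exact hzero ▸ summable_zero

lemma TendstoInEntropy.convPow {μk : ι → G → ℝ} {μ : G → ℝ} (h : TendstoInEntropy l μk μ)
    (n : ℕ) : TendstoInEntropy l (fun i => convPow (μk i) n) (convPow μ n) := by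
  induction n with
  | zero => exact .const (isPMF_convPow_zero μ) (summable_negMulLog_convPow_zero μ)
  | succ n ih => exact ih.conv h

end Convolution

theorem stmt19_general {G : Type*} [Group G] (μ : G → ℝ) (μk : ℕ → G → ℝ)
    (hμ : IsPMF μ) (hμk : ∀ k, IsPMF (μk k))
    (hHμ : Summable (fun g => Real.negMulLog (μ g)))
    (hHμk : ∀ k, Summable (fun g => Real.negMulLog (μk k g)))
    (hconv : ∀ g : G, Tendsto (fun k => μk k g) atTop (nhds (μ g)))
    (hHconv : Tendsto (fun k => Hent (μk k)) atTop (nhds (Hent μ))) :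
    ∀ n : ℕ, 1 ≤ n →
      (∀ g : G, Tendsto (fun k => convPow (μk k) n g) atTop (nhds (convPow μ n g))) ∧
        Tendsto (fun k => Hent (convPow (μk k) n)) atTop (nhds (Hent (convPow μ n))) := by
  intro n _
  have h := (TendstoInEntropy.mk hμ hμk hHμ hHμk hconv hHconv).convPow n
  exact ⟨h.tendsto_apply, h.tendsto_entropy⟩

/-- Pointwise convergence of probability measures with convergence of finite
entropies passes to every fixed convolution power. -/
theorem stmt19 {G : Type*} [Group G] [Countable G] (μ : G → ℝ) (μk : ℕ → G → ℝ)
    (hμ : IsPMF μ) (hμk : ∀ k, IsPMF (μk k))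
    (hHμ : Summable (fun g => Real.negMulLog (μ g)))
    (hHμk : ∀ k, Summable (fun g => Real.negMulLog (μk k g)))
    (hconv : ∀ g : G, Tendsto (fun k => μk k g) atTop (nhds (μ g)))
    (hHconv : Tendsto (fun k => Hent (μk k)) atTop (nhds (Hent μ))) :
    ∀ n : ℕ, 1 ≤ n →
      (∀ g : G, Tendsto (fun k => convPow (μk k) n g) atTop (nhds (convPow μ n g))) ∧
        Tendsto (fun k => Hent (convPow (μk k) n)) atTop (nhds (Hent (convPow μ n))) :=
  stmt19_general μ μk hμ hμk hHμ hHμk hconv hHconv
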